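/- Let n = (n₁,n₂,n₃) be a unit vector in ℝ³ such that the six real numbers n₂²−n₃²±g(n), n₃²−n₁²±g(n), n₁²−n₂²±g(n) are all nonzero. Then f(u₊(n)) = g(n), f(u₋(n)) = −g(n), and for every unit vector m ∈ ℝ³ with ⟨m, n⟩ = 0 one has −g(n) ≤ f(m) ≤ g(n); that is, f restricted to unit vectors orthogonal to n attains its maximum g(n) at u₊(n) and its minimum −g(n) at u₋(n). -/
import Mathlib


noncomputable section

/-- Dot product on ℝ³ (standard inner product), vectors as triples. -/
def dot3 (x y : ℝ × ℝ × ℝ) : ℝ := x.1 * y.1 + x.2.1 * y.2.1 + x.2.2 * y.2.2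

/-- g(n) = √(1 − 4(n₁²n₂² + n₂²n₃² + n₃²n₁²) + 9n₁²n₂²n₃²). -/
def gfun (n₁ n₂ n₃ : ℝ) : ℝ :=
  Real.sqrt (1 - 4*(n₁^2*n₂^2 + n₂^2*n₃^2 + n₃^2*n₁^2) + 9*n₁^2*n₂^2*n₃^2)

/-- Normalizing factor ρ for the vector (n₁/(n₂²−n₃²+e), n₂/(n₃²−n₁²+e), n₃/(n₁²−n₂²+e)). -/
def rho (n₁ n₂ n₃ e : ℝ) : ℝ :=
  1 / Real.sqrt (n₁^2/(n₂^2-n₃^2+e)^2 + n₂^2/(n₃^2-n₁^2+e)^2 + n₃^2/(n₁^2-n₂^2+e)^2)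

/-- The unit vector in the direction (n₁/(n₂²−n₃²+e), n₂/(n₃²−n₁²+e), n₃/(n₁²−n₂²+e)). -/
def uvec (n₁ n₂ n₃ e : ℝ) : ℝ × ℝ × ℝ :=
  (rho n₁ n₂ n₃ e * (n₁ / (n₂^2 - n₃^2 + e)),
   rho n₁ n₂ n₃ e * (n₂ / (n₃^2 - n₁^2 + e)),
   rho n₁ n₂ n₃ e * (n₃ / (n₁^2 - n₂^2 + e)))

/-- u₊(n): the + sign throughout. -/
def uplus (n₁ n₂ n₃ : ℝ) : ℝ × ℝ × ℝ := uvec n₁ n₂ n₃ (gfun n₁ n₂ n₃)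

/-- u₋(n): the − sign throughout. -/
def uminus (n₁ n₂ n₃ : ℝ) : ℝ × ℝ × ℝ := uvec n₁ n₂ n₃ (-(gfun n₁ n₂ n₃))

/-- f(m) = (n₃²−n₂²)m₁² + (n₁²−n₃²)m₂² + (n₂²−n₁²)m₃², for fixed unit vector n. -/
def ffun (n₁ n₂ n₃ : ℝ) (m : ℝ × ℝ × ℝ) : ℝ :=
  (n₃^2 - n₂^2) * m.1^2 + (n₁^2 - n₃^2) * m.2.1^2 + (n₂^2 - n₁^2) * m.2.2^2


private lemma sqpos {x : ℝ} (h : x ≠ 0) : 0 < x^2 :=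
  lt_of_le_of_ne (sq_nonneg x) (Ne.symm (pow_ne_zero 2 h))

private lemma schur_aux (a b c : ℝ) (ha : 0 ≤ a) (hb : 0 ≤ b) (hc : 0 ≤ c)
    (h : a + b + c = 1) : 0 ≤ 1 - 4*(a*b + b*c + c*a) + 9*a*b*c := by
  rcases le_total a b with hab | hab <;> rcases le_total b c with hbc | hbc <;>
    rcases le_total a c with hac | hac <;>
    nlinarith [mul_nonneg (mul_nonneg ha hb) hc, sq_nonneg (a-b), sq_nonneg (b-c),
      sq_nonneg (a-c), mul_nonneg ha (sq_nonneg (b-c)), mul_nonneg hb (sq_nonneg (a-c)),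
      mul_nonneg hc (sq_nonneg (a-b))]

private lemma fuvec (n₁ n₂ n₃ e : ℝ) (hunit : n₁^2 + n₂^2 + n₃^2 = 1)
    (hD1 : n₂^2 - n₃^2 + e ≠ 0) (hD2 : n₃^2 - n₁^2 + e ≠ 0) (hD3 : n₁^2 - n₂^2 + e ≠ 0)
    (he : e^2 = 1 - 4*(n₁^2*n₂^2 + n₂^2*n₃^2 + n₃^2*n₁^2) + 9*n₁^2*n₂^2*n₃^2) :
    ffun n₁ n₂ n₃ (uvec n₁ n₂ n₃ e) = e := by
  have hn : n₁ ≠ 0 ∨ n₂ ≠ 0 ∨ n₃ ≠ 0 := by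
    by_contra h
    push_neg at h
    obtain ⟨e1, e2, e3⟩ := h
    rw [e1, e2, e3] at hunit
    norm_num at hunit
  have hq1 : (0:ℝ) < (n₂^2 - n₃^2 + e)^2 := sqpos hD1
  have hq2 : (0:ℝ) < (n₃^2 - n₁^2 + e)^2 := sqpos hD2
  have hq3 : (0:ℝ) < (n₁^2 - n₂^2 + e)^2 := sqpos hD3
  have hTpos : 0 < n₁^2/(n₂^2-n₃^2+e)^2 + n₂^2/(n₃^2-n₁^2+e)^2 + n₃^2/(n₁^2-n₂^2+e)^2 := by
    have t1 : 0 ≤ n₁^2/(n₂^2-n₃^2+e)^2 := div_nonneg (sq_nonneg _) hq1.le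
    have t2 : 0 ≤ n₂^2/(n₃^2-n₁^2+e)^2 := div_nonneg (sq_nonneg _) hq2.le
    have t3 : 0 ≤ n₃^2/(n₁^2-n₂^2+e)^2 := div_nonneg (sq_nonneg _) hq3.le
    rcases hn with h | h | h
    · have : 0 < n₁^2/(n₂^2-n₃^2+e)^2 := div_pos (sqpos h) hq1
      linarith
    · have : 0 < n₂^2/(n₃^2-n₁^2+e)^2 := div_pos (sqpos h) hq2
      linarith
    · have : 0 < n₃^2/(n₁^2-n₂^2+e)^2 := div_pos (sqpos h) hq3
      linarith
  have hTne : n₁^2/(n₂^2-n₃^2+e)^2 + n₂^2/(n₃^2-n₁^2+e)^2 + n₃^2/(n₁^2-n₂^2+e)^2 ≠ 0 :=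
    hTpos.ne'
  have hrho2 : (rho n₁ n₂ n₃ e)^2
      = 1/(n₁^2/(n₂^2-n₃^2+e)^2 + n₂^2/(n₃^2-n₁^2+e)^2 + n₃^2/(n₁^2-n₂^2+e)^2) := by
    rw [rho, div_pow, one_pow, Real.sq_sqrt hTpos.le]
  have hN : n₁^2*((n₃^2-n₁^2+e)*(n₁^2-n₂^2+e)) + n₂^2*((n₂^2-n₃^2+e)*(n₁^2-n₂^2+e))
      + n₃^2*((n₂^2-n₃^2+e)*(n₃^2-n₁^2+e)) = 0 := by
    linear_combination (n₁^2+n₂^2+n₃^2) * he + (-n₁^4 + 9*n₁^2*n₂^2*n₃^2 - 2*n₁^2*n₂^2 - 2*n₁^2*n₃^2 - n₁^2 - n₂^4 - 2*n₂^2*n₃^2 - n₂^2 - n₃^4 - n₃^2) * hunit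
  have hS : n₁^2/(n₂^2-n₃^2+e) + n₂^2/(n₃^2-n₁^2+e) + n₃^2/(n₁^2-n₂^2+e) = 0 := by
    rw [div_add_div _ _ hD1 hD2, div_add_div _ _ (mul_ne_zero hD1 hD2) hD3,
      div_eq_zero_iff]
    left
    linear_combination hN
  have key : ffun n₁ n₂ n₃ (uvec n₁ n₂ n₃ e)
      = (rho n₁ n₂ n₃ e)^2 * ((n₃^2-n₂^2)*(n₁/(n₂^2-n₃^2+e))^2
        + (n₁^2-n₃^2)*(n₂/(n₃^2-n₁^2+e))^2 + (n₂^2-n₁^2)*(n₃/(n₁^2-n₂^2+e))^2) := by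
    simp only [ffun, uvec]
    ring
  have hT1 : (n₃^2-n₂^2)*(n₁/(n₂^2-n₃^2+e))^2 + (n₁^2-n₃^2)*(n₂/(n₃^2-n₁^2+e))^2
      + (n₂^2-n₁^2)*(n₃/(n₁^2-n₂^2+e))^2
      = e * (n₁^2/(n₂^2-n₃^2+e)^2 + n₂^2/(n₃^2-n₁^2+e)^2 + n₃^2/(n₁^2-n₂^2+e)^2)
        - (n₁^2/(n₂^2-n₃^2+e) + n₂^2/(n₃^2-n₁^2+e) + n₃^2/(n₁^2-n₂^2+e)) := by
    field_simp
    ring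
  rw [key, hrho2, hT1, hS, sub_zero, one_div, inv_mul_eq_div, mul_div_assoc,
    div_self hTne, mul_one]

/-- f(u₊(n)) = g(n), f(u₋(n)) = −g(n), and f restricted to unit vectors
orthogonal to n attains its maximum g(n) at u₊(n) and its minimum −g(n) at u₋(n). -/
theorem stmt8 (n₁ n₂ n₃ : ℝ) (hunit : n₁^2 + n₂^2 + n₃^2 = 1)
    (h1 : n₂^2 - n₃^2 + gfun n₁ n₂ n₃ ≠ 0)
    (h2 : n₃^2 - n₁^2 + gfun n₁ n₂ n₃ ≠ 0)
    (h3 : n₁^2 - n₂^2 + gfun n₁ n₂ n₃ ≠ 0)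
    (h4 : n₂^2 - n₃^2 - gfun n₁ n₂ n₃ ≠ 0)
    (h5 : n₃^2 - n₁^2 - gfun n₁ n₂ n₃ ≠ 0)
    (h6 : n₁^2 - n₂^2 - gfun n₁ n₂ n₃ ≠ 0) :
    ffun n₁ n₂ n₃ (uplus n₁ n₂ n₃) = gfun n₁ n₂ n₃ ∧
    ffun n₁ n₂ n₃ (uminus n₁ n₂ n₃) = -(gfun n₁ n₂ n₃) ∧
    (∀ m : ℝ × ℝ × ℝ, dot3 m m = 1 → dot3 m (n₁, n₂, n₃) = 0 →
      -(gfun n₁ n₂ n₃) ≤ ffun n₁ n₂ n₃ m ∧ ffun n₁ n₂ n₃ m ≤ gfun n₁ n₂ n₃) := by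
  have hg0 : 0 ≤ gfun n₁ n₂ n₃ := Real.sqrt_nonneg _
  have hR : 0 ≤ 1 - 4*(n₁^2*n₂^2 + n₂^2*n₃^2 + n₃^2*n₁^2) + 9*n₁^2*n₂^2*n₃^2 := by
    have := schur_aux (n₁^2) (n₂^2) (n₃^2) (sq_nonneg _) (sq_nonneg _) (sq_nonneg _) hunit
    nlinarith [this]
  have hg2 : (gfun n₁ n₂ n₃)^2
      = 1 - 4*(n₁^2*n₂^2 + n₂^2*n₃^2 + n₃^2*n₁^2) + 9*n₁^2*n₂^2*n₃^2 :=
    Real.sq_sqrt hR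
  refine ⟨fuvec n₁ n₂ n₃ _ hunit h1 h2 h3 hg2, ?_, ?_⟩
  · have hD1 : n₂^2 - n₃^2 + -(gfun n₁ n₂ n₃) ≠ 0 := by rw [← sub_eq_add_neg]; exact h4
    have hD2 : n₃^2 - n₁^2 + -(gfun n₁ n₂ n₃) ≠ 0 := by rw [← sub_eq_add_neg]; exact h5
    have hD3 : n₁^2 - n₂^2 + -(gfun n₁ n₂ n₃) ≠ 0 := by rw [← sub_eq_add_neg]; exact h6
    have he : (-(gfun n₁ n₂ n₃))^2
        = 1 - 4*(n₁^2*n₂^2 + n₂^2*n₃^2 + n₃^2*n₁^2) + 9*n₁^2*n₂^2*n₃^2 := by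
      rw [neg_pow]; simpa using hg2
    exact fuvec n₁ n₂ n₃ _ hunit hD1 hD2 hD3 he
  · intro m hm ho
    simp only [dot3] at hm ho
    have key : (ffun n₁ n₂ n₃ m)^2
        + ((n₃^2-n₂^2)*m.1*(n₂*m.2.2-n₃*m.2.1) + (n₁^2-n₃^2)*m.2.1*(n₃*m.1-n₁*m.2.2)
          + (n₂^2-n₁^2)*m.2.2*(n₁*m.2.1-n₂*m.1))^2
        = 1 - 4*(n₁^2*n₂^2 + n₂^2*n₃^2 + n₃^2*n₁^2) + 9*n₁^2*n₂^2*n₃^2 := by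
      simp only [ffun]
      linear_combination (-m.1^3*n₁^5 + m.1^3*n₁^3*n₂^2 + m.1^3*n₁^3*n₃^2 + 2*m.1^3*n₁*n₂^4 - 5*m.1^3*n₁*n₂^2*n₃^2 + 2*m.1^3*n₁*n₃^4 + m.1^2*m.2.1*n₁^4*n₂ - m.1^2*m.2.1*n₁^2*n₂^3 - m.1^2*m.2.1*n₁^2*n₂*n₃^2 - 2*m.1^2*m.2.1*n₂^5 + 5*m.1^2*m.2.1*n₂^3*n₃^2 - 2*m.1^2*m.2.1*n₂*n₃^4 + m.1^2*m.2.2*n₁^4*n₃ - m.1^2*m.2.2*n₁^2*n₂^2*n₃ - m.1^2*m.2.2*n₁^2*n₃^3 - 2*m.1^2*m.2.2*n₂^4*n₃ + 5*m.1^2*m.2.2*n₂^2*n₃^3 - 2*m.1^2*m.2.2*n₃^5 - 2*m.1*m.2.1^2*n₁^5 - m.1*m.2.1^2*n₁^3*n₂^2 + 5*m.1*m.2.1^2*n₁^3*n₃^2 + m.1*m.2.1^2*n₁*n₂^4 - m.1*m.2.1^2*n₁*n₂^2*n₃^2 - 2*m.1*m.2.1^2*n₁*n₃^4 - 2*m.1*m.2.2^2*n₁^5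 + 5*m.1*m.2.2^2*n₁^3*n₂^2 - m.1*m.2.2^2*n₁^3*n₃^2 - 2*m.1*m.2.2^2*n₁*n₂^4 - m.1*m.2.2^2*n₁*n₂^2*n₃^2 + m.1*m.2.2^2*n₁*n₃^4 + 2*m.2.1^3*n₁^4*n₂ + m.2.1^3*n₁^2*n₂^3 - 5*m.2.1^3*n₁^2*n₂*n₃^2 - m.2.1^3*n₂^5 + m.2.1^3*n₂^3*n₃^2 + 2*m.2.1^3*n₂*n₃^4 - 2*m.2.1^2*m.2.2*n₁^4*n₃ - m.2.1^2*m.2.2*n₁^2*n₂^2*n₃ + 5*m.2.1^2*m.2.2*n₁^2*n₃^3 + m.2.1^2*m.2.2*n₂^4*n₃ - m.2.1^2*m.2.2*n₂^2*n₃^3 - 2*m.2.1^2*m.2.2*n₃^5 - 2*m.2.1*m.2.2^2*n₁^4*n₂ + 5*m.2.1*m.2.2^2*n₁^2*n₂^3 - m.2.1*m.2.2^2*n₁^2*n₂*n₃^2 - 2*m.2.1*m.2.2^2*n₂^5 - m.2.1*m.2.2^2*n₂^3*n₃^2 + m.2.1*m.2.2^2*n₂*n₃^4 + 2*m.2.2^3*n₁^4*n₃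 - 5*m.2.2^3*n₁^2*n₂^2*n₃ + m.2.2^3*n₁^2*n₃^3 + 2*m.2.2^3*n₂^4*n₃ + m.2.2^3*n₂^2*n₃^3 - m.2.2^3*n₃^5) * ho + (m.1^2*n₁^6 - m.1^2*n₁^4*n₂^2 - m.1^2*n₁^4*n₃^2 - m.1^2*n₁^2*n₂^4 + 3*m.1^2*n₁^2*n₂^2*n₃^2 - m.1^2*n₁^2*n₃^4 + m.1^2*n₂^6 - m.1^2*n₂^4*n₃^2 - m.1^2*n₂^2*n₃^4 + m.1^2*n₃^6 + m.2.1^2*n₁^6 - m.2.1^2*n₁^4*n₂^2 - m.2.1^2*n₁^4*n₃^2 - m.2.1^2*n₁^2*n₂^4 + 3*m.2.1^2*n₁^2*n₂^2*n₃^2 - m.2.1^2*n₁^2*n₃^4 + m.2.1^2*n₂^6 - m.2.1^2*n₂^4*n₃^2 - m.2.1^2*n₂^2*n₃^4 + m.2.1^2*n₃^6 + m.2.2^2*n₁^6 - m.2.2^2*n₁^4*n₂^2 - m.2.2^2*n₁^4*n₃^2 - m.2.2^2*n₁^2*n₂^4 + 3*m.2.2^2*n₁^2*n₂^2*n₃^2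 - m.2.2^2*n₁^2*n₃^4 + m.2.2^2*n₂^6 - m.2.2^2*n₂^4*n₃^2 - m.2.2^2*n₂^2*n₃^4 + m.2.2^2*n₃^6 + n₁^6 - n₁^4*n₂^2 - n₁^4*n₃^2 - n₁^2*n₂^4 + 3*n₁^2*n₂^2*n₃^2 - n₁^2*n₃^4 + n₂^6 - n₂^4*n₃^2 - n₂^2*n₃^4 + n₃^6) * hm + (-m.1^4*n₂^4 + 2*m.1^4*n₂^2*n₃^2 - m.1^4*n₃^4 + 2*m.1^2*m.2.1^2*n₁^2*n₂^2 - 2*m.1^2*m.2.1^2*n₁^2*n₃^2 - 2*m.1^2*m.2.1^2*n₂^2*n₃^2 + 2*m.1^2*m.2.1^2*n₃^4 - 2*m.1^2*m.2.2^2*n₁^2*n₂^2 + 2*m.1^2*m.2.2^2*n₁^2*n₃^2 + 2*m.1^2*m.2.2^2*n₂^4 - 2*m.1^2*m.2.2^2*n₂^2*n₃^2 - m.2.1^4*n₁^4 + 2*m.2.1^4*n₁^2*n₃^2 - m.2.1^4*n₃^4 + 2*m.2.1^2*m.2.2^2*n₁^4 - 2*m.2.1^2*m.2.2^2*n₁^2*n₂^2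 - 2*m.2.1^2*m.2.2^2*n₁^2*n₃^2 + 2*m.2.1^2*m.2.2^2*n₂^2*n₃^2 - m.2.2^4*n₁^4 + 2*m.2.2^4*n₁^2*n₂^2 - m.2.2^4*n₂^4 + n₁^4 - 2*n₁^2*n₂^2 - 2*n₁^2*n₃^2 + n₁^2 + n₂^4 - 2*n₂^2*n₃^2 + n₂^2 + n₃^4 + n₃^2 + 1) * hunit
    have hf2 : (ffun n₁ n₂ n₃ m)^2 ≤ (gfun n₁ n₂ n₃)^2 := by
      have hy := sq_nonneg ((n₃^2-n₂^2)*m.1*(n₂*m.2.2-n₃*m.2.1)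
        + (n₁^2-n₃^2)*m.2.1*(n₃*m.1-n₁*m.2.2) + (n₂^2-n₁^2)*m.2.2*(n₁*m.2.1-n₂*m.1))
      linarith [key, hg2]
    constructor
    · nlinarith [hf2, hg0]
    · nlinarith [hf2, hg0]
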